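/- Let n = 2m with m ≥ 1, q = 2^n, and for x ∈ F_q write x̄ = x^{2^m}. Let D = {x ∈ F_q^* : Tr^m(x + x̄) = Tr^m(x·x̄) = 1}, where Tr^m : F_{2^m} → F_2 is the absolute trace (note x + x̄ and x·x̄ lie in F_{2^m}). Then |D| = 2^{n−2} if m is even, and |D| = 2^{n−2} + 2^{m−1} if m is odd. -/

import Mathlib

open scoped Classical

noncomputable instance (n : ℕ) : Fintype (GaloisField 2 n) := Fintype.ofFinite _

/-- The conjugate `x̄ = x^(2^m)` of `x ∈ F_{2^(2m)}` over the subfield `F_{2^m}`. -/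
noncomputable def fieldConj (m : ℕ) (x : GaloisField 2 (2 * m)) : GaloisField 2 (2 * m) :=
  x ^ (2 ^ m)

/-- The absolute trace `Tr^m : F_{2^m} → F_2` of the subfield `F_{2^m}`,
computed inside `F_{2^(2m)}` by the formula `Tr^m(y) = ∑_{i<m} y^(2^i)`;
for `y` in the subfield `F_{2^m}` its value lies in `F_2 = {0,1}`. -/
noncomputable def subTr (m : ℕ) (y : GaloisField 2 (2 * m)) : GaloisField 2 (2 * m) :=
  ∑ i ∈ Finset.range m, y ^ (2 ^ i)

/-- The set `D = {x ∈ F_q^* : Tr^m(x + x̄) = Tr^m(x·x̄) = 1}`, `q = 2^(2m)`. -/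
noncomputable def Dtwo (m : ℕ) : Finset (GaloisField 2 (2 * m)) :=
  Finset.univ.filter (fun x : GaloisField 2 (2 * m) => x ≠ 0 ∧
    subTr m (x + fieldConj m x) = 1 ∧ subTr m (x * fieldConj m x) = 1)

/-!
Write `T` for the absolute trace of `𝔽_q` and `N x = x x̄ = x ^ (2 ^ m + 1)` for the norm onto
`𝔽_{2^m}`, so that `D = {x | T x = 1 ∧ Tr^m (N x) = 1}`. Adding indicators,
`2 |D| + |{T x + Tr^m (N x) = 1}| = |{T x = 1}| + |{Tr^m (N x) = 1}|`.
A trace `∑_{i<k} y ^ 2 ^ i` is a polynomial of degree `2 ^ (k - 1)`, so it takes each of its two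
values exactly `2 ^ (k - 1)` times on `𝔽_{2^k}`; and `N` maps `𝔽_q^*` onto `𝔽_{2^m}^*` with
fibres of size `2 ^ m + 1` (cyclicity of `𝔽_q^*`). Hence the right-hand side is
`2 ^ (2m - 1) + 2 ^ (m - 1) (2 ^ m + 1)`. Finally `Tr^m (N (1 + x)) = m + T x + Tr^m (N x)`, so
translating by `1` turns the middle set into `{Tr^m (N x) = 1 + m}`: the set `{Tr^m (N x) = 1}`
when `m` is even and its complement when `m` is odd.
-/

open Finset Polynomial

def frobTrace {R : Type*} [CommSemiring R] (k : ℕ) (y : R) : R :=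
  ∑ i ∈ range k, y ^ 2 ^ i

section CharTwo

variable {R : Type*} [CommRing R] [CharP R 2]

theorem frobTrace_add (k : ℕ) (x y : R) :
    frobTrace k (x + y) = frobTrace k x + frobTrace k y := by
  simp only [frobTrace, add_pow_char_pow, sum_add_distrib]

theorem frobTrace_add_self_pow (k : ℕ) (x : R) :
    frobTrace k (x + x ^ 2 ^ k) = frobTrace (2 * k) x := by
  simp only [frobTrace, two_mul, sum_range_add, add_pow_char_pow, sum_add_distrib, ← pow_mul,
    ← pow_add]

theorem frobTrace_sq {k : ℕ} {x : R} (hx : x ^ 2 ^ k = x) :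
    frobTrace k x ^ 2 = frobTrace k x := by
  have h := sum_range_succ' (fun i => x ^ 2 ^ i) k
  rw [sum_range_succ, hx, pow_zero, pow_one, add_left_inj] at h
  rw [frobTrace, sum_pow_char]
  simp only [← pow_mul, ← pow_succ]
  exact h.symm

theorem frobTrace_eq_zero_or_eq_one [IsDomain R] {k : ℕ} {x : R} (hx : x ^ 2 ^ k = x) :
    frobTrace k x = 0 ∨ frobTrace k x = 1 :=
  eq_zero_or_one_of_sq_eq_self (frobTrace_sq hx)

theorem frobTrace_one_add_pow (k : ℕ) (x : R) :
    frobTrace k ((1 + x) ^ (2 ^ k + 1)) =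
      k + frobTrace (2 * k) x + frobTrace k (x ^ (2 ^ k + 1)) := by
  have h : (1 + x) ^ (2 ^ k + 1) = 1 + (x + x ^ 2 ^ k) + x ^ (2 ^ k + 1) := by
    rw [pow_succ, add_pow_char_pow, one_pow]
    ring
  have hone : frobTrace k (1 : R) = k := by simp [frobTrace]
  rw [h, frobTrace_add, frobTrace_add, hone, frobTrace_add_self_pow]

end CharTwo

theorem two_mul_card_filter_and_add_card_filter_add {α R : Type*} [Fintype α] [Ring R]
    [CharP R 2] [Nontrivial R] {f g : α → R} (hf : ∀ x, f x = 0 ∨ f x = 1)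
    (hg : ∀ x, g x = 0 ∨ g x = 1) :
    2 * #{x | f x = 1 ∧ g x = 1} + #{x | f x + g x = 1} = #{x | f x = 1} + #{x | g x = 1} := by
  simp only [card_filter, mul_sum, ← sum_add_distrib]
  refine sum_congr rfl fun x _ => ?_
  rcases hf x with hfx | hfx <;> rcases hg x with hgx | hgx <;>
    simp [hfx, hgx, CharTwo.add_self_eq_zero]

theorem card_filter_eq_zero_add_card_filter_eq_one {α R : Type*} [Fintype α] [Semiring R]
    [Nontrivial R] {f : α → R} (hf : ∀ x, f x = 0 ∨ f x = 1) :
    #{x | f x = 0} + #{x | f x = 1} = Fintype.card α := by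
  rw [← card_univ, ← card_filter_add_card_filter_not (s := univ) (fun x => f x = 0)]
  congr 2
  ext x
  rcases hf x with h | h <;> simp [h]

theorem monic_sum_X_pow_two_pow {R : Type*} [CommSemiring R] [Nontrivial R] (k : ℕ) :
    (∑ i ∈ range (k + 1), (X : R[X]) ^ 2 ^ i).Monic ∧
      (∑ i ∈ range (k + 1), (X : R[X]) ^ 2 ^ i).natDegree = 2 ^ k := by
  induction k with
  | zero => simp
  | succ k ih =>
    have hlt : (∑ i ∈ range (k + 1), (X : R[X]) ^ 2 ^ i).degree < ↑(2 ^ (k + 1)) := by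
      rw [degree_eq_natDegree ih.1.ne_zero, ih.2]
      exact_mod_cast Nat.pow_lt_pow_right one_lt_two k.lt_succ_self
    rw [sum_range_succ, add_comm]
    refine ⟨monic_X_pow_add hlt, ?_⟩
    rw [natDegree_add_eq_left_of_degree_lt (by rwa [degree_X_pow]), natDegree_X_pow]

section FiniteField

variable {K : Type*} [Field K] [Fintype K]

theorem card_filter_frobTrace_eq_le (k : ℕ) (c : K) :
    #{y | frobTrace (k + 1) y = c} ≤ 2 ^ k := by
  set p : K[X] := ∑ i ∈ range (k + 1), X ^ 2 ^ i - C c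
  obtain ⟨hmonic, hdeg⟩ := monic_sum_X_pow_two_pow (R := K) k
  have hp : p ≠ 0 := (hmonic.sub_of_left (degree_C_le.trans_lt (by
    rw [degree_eq_natDegree hmonic.ne_zero, hdeg]; exact_mod_cast Nat.two_pow_pos k))).ne_zero
  calc #{y | frobTrace (k + 1) y = c} ≤ p.natDegree := by
        refine card_le_degree_of_subset_roots fun y hy => ?_
        rw [mem_roots hp, IsRoot, eval_sub, eval_finsetSum]
        simp only [eval_pow, eval_X, eval_C]
        exact sub_eq_zero.mpr (mem_filter.mp hy).2
    _ = 2 ^ k := by rw [natDegree_sub_C, hdeg]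

theorem card_filter_frobTrace_eq_one [CharP K 2] {k : ℕ}
    (hS : #{y : K | y ^ 2 ^ (k + 1) = y} = 2 ^ (k + 1)) :
    #{y : K | y ^ 2 ^ (k + 1) = y ∧ frobTrace (k + 1) y = 1} = 2 ^ k := by
  have hsplit := card_filter_add_card_filter_not (s := {y : K | y ^ 2 ^ (k + 1) = y})
    (fun y => frobTrace (k + 1) y = 1)
  have hone : #{y : K | y ^ 2 ^ (k + 1) = y ∧ frobTrace (k + 1) y = 1} ≤ 2 ^ k :=
    (card_le_card (monotone_filter_right _ fun y _ h => h.2)).trans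
      (card_filter_frobTrace_eq_le k 1)
  have hzero : #(filter (fun y => ¬frobTrace (k + 1) y = 1) {y : K | y ^ 2 ^ (k + 1) = y})
      ≤ 2 ^ k := by
    refine (card_le_card fun y hy => ?_).trans (card_filter_frobTrace_eq_le k 0)
    simp only [mem_filter, mem_univ, true_and] at hy ⊢
    exact (frobTrace_eq_zero_or_eq_one hy.1).resolve_right hy.2
  rw [filter_filter, hS] at hsplit
  have := pow_succ 2 k
  omega

variable (K) in
theorem exists_isPrimitiveRoot_card_sub_one :
    ∃ ζ : K, IsPrimitiveRoot ζ (Fintype.card K - 1) := by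
  obtain ⟨g, hg⟩ := IsCyclic.exists_ofOrder_eq_natCard (α := Kˣ)
  refine ⟨g, IsPrimitiveRoot.coe_units_iff.mpr (IsPrimitiveRoot.iff_orderOf.mpr ?_)⟩
  rw [hg, Nat.card_units, Nat.card_eq_fintype_card]

theorem card_filter_pow_eq {ζ : K} {a b : ℕ} [NeZero a] [NeZero b]
    (hζ : IsPrimitiveRoot ζ (a * b)) {y : K} (hy : y ^ b = 1) : #{x | x ^ a = y} = a := by
  have hpos : 0 < a * b := Nat.pos_of_ne_zero (NeZero.ne _)
  obtain ⟨i, -, hi⟩ := (hζ.pow hpos rfl).eq_pow_of_pow_eq_one hy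
  have hroots : Multiset.card (nthRoots a y) = a := by
    rw [(hζ.pow hpos (mul_comm a b)).card_nthRoots, if_pos ⟨ζ ^ i, by rw [← hi, ← pow_mul,
      ← pow_mul, mul_comm]⟩]
  have hy0 : y ≠ 0 := by
    rintro rfl
    exact zero_ne_one ((zero_pow (NeZero.ne b)).symm.trans hy)
  calc #{x | x ^ a = y} = #(nthRoots a y).toFinset := by
        congr 1
        ext x
        simp [mem_nthRoots (Nat.pos_of_ne_zero (NeZero.ne a))]
    _ = a := by
      rw [Multiset.toFinset_card_of_nodup ((hζ.pow hpos (mul_comm a b)).nthRoots_nodup hy0),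
        hroots]

end FiniteField

section SquareOrder

variable {K : Type*} [Field K] [Fintype K] {n : ℕ}

theorem exists_isPrimitiveRoot_sub_one_mul_add_one (hK : Fintype.card K = n ^ 2) :
    ∃ ζ : K, IsPrimitiveRoot ζ ((n - 1) * (n + 1)) := by
  have h : Fintype.card K - 1 = (n - 1) * (n + 1) := by
    rw [hK, mul_comm, ← Nat.sq_sub_sq, one_pow]
  exact h ▸ exists_isPrimitiveRoot_card_sub_one K

theorem one_lt_of_card_eq_sq (hK : Fintype.card K = n ^ 2) : 1 < n :=
  (Nat.one_lt_pow_iff two_ne_zero).mp (hK ▸ Fintype.one_lt_card)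

theorem pow_succ_pow_eq_self (hK : Fintype.card K = n ^ 2) (x : K) :
    (x ^ (n + 1)) ^ n = x ^ (n + 1) := by
  rw [← pow_mul, add_mul, one_mul, ← sq, ← hK, pow_add, FiniteField.pow_card, pow_succ']

theorem card_filter_pow_eq_self (hK : Fintype.card K = n ^ 2) : #{y : K | y ^ n = y} = n := by
  have hn := one_lt_of_card_eq_sq hK
  have : NeZero (n - 1) := ⟨by omega⟩
  have : NeZero (n + 1) := ⟨by omega⟩
  obtain ⟨ζ, hζ⟩ := exists_isPrimitiveRoot_sub_one_mul_add_one hK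
  have h : ({y | y ^ n = y} : Finset K) = insert 0 ({y | y ^ (n - 1) = 1} : Finset K) := by
    ext y
    rw [mem_insert, mem_filter, mem_filter]
    conv_lhs => rw [← Nat.sub_add_cancel hn.le, pow_succ, mul_left_eq_self₀]
    simp [or_comm]
  rw [h, card_insert_of_notMem (by simp [zero_pow (NeZero.ne (n - 1))]), card_filter_pow_eq hζ
    (one_pow _)]
  omega

theorem card_filter_pow_succ_eq (hK : Fintype.card K = n ^ 2) {y : K} (hy : y ^ n = y)
    (hy0 : y ≠ 0) : #{x : K | x ^ (n + 1) = y} = n + 1 := by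
  have hn := one_lt_of_card_eq_sq hK
  have : NeZero (n - 1) := ⟨by omega⟩
  have : NeZero (n + 1) := ⟨by omega⟩
  obtain ⟨ζ, hζ⟩ := exists_isPrimitiveRoot_sub_one_mul_add_one hK
  refine card_filter_pow_eq (mul_comm (n - 1) (n + 1) ▸ hζ) ?_
  rw [← Nat.sub_add_cancel hn.le, pow_succ] at hy
  exact (mul_eq_right₀ hy0).mp hy

end SquareOrder

section CharTwoFiniteField

variable {K : Type*} [Field K] [Fintype K] [CharP K 2]

theorem card_filter_frobTrace_eq_one_of_card {k : ℕ} (hK : Fintype.card K = 2 ^ (k + 1)) :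
    #{x : K | frobTrace (k + 1) x = 1} = 2 ^ k := by
  have hall : ∀ y : K, y ^ 2 ^ (k + 1) = y := fun y => hK ▸ FiniteField.pow_card y
  simpa [hall] using card_filter_frobTrace_eq_one (K := K) (k := k) (by simp [hall, hK])

theorem card_filter_frobTrace_pow_eq_one {k : ℕ} (hK : Fintype.card K = (2 ^ (k + 1)) ^ 2) :
    #{x : K | frobTrace (k + 1) (x ^ (2 ^ (k + 1) + 1)) = 1} = 2 ^ k * (2 ^ (k + 1) + 1) := by
  rw [card_eq_sum_card_fiberwise (f := fun x => x ^ (2 ^ (k + 1) + 1))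
      (t := {y : K | y ^ 2 ^ (k + 1) = y ∧ frobTrace (k + 1) y = 1})
      fun x hx => by simpa [pow_succ_pow_eq_self hK x] using hx,
    sum_congr rfl fun y hy => ?_, sum_const, smul_eq_mul,
    card_filter_frobTrace_eq_one (card_filter_pow_eq_self hK)]
  rw [mem_filter] at hy
  have hy0 : y ≠ 0 := by
    rintro rfl
    simp [frobTrace] at hy
  rw [filter_filter]
  refine (congrArg card (filter_congr fun x _ => ?_)).trans (card_filter_pow_succ_eq hK hy.2.1 hy0)
  exact ⟨And.right, fun hx => ⟨hx ▸ hy.2.2, hx⟩⟩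

theorem two_mul_card_filter_frobTrace_add_card {m : ℕ} (hK : Fintype.card K = (2 ^ m) ^ 2) :
    2 * #{x : K | frobTrace (2 * m) x = 1 ∧ frobTrace m (x ^ (2 ^ m + 1)) = 1} +
        #{x : K | frobTrace m (x ^ (2 ^ m + 1)) = 1 + m} =
      #{x : K | frobTrace (2 * m) x = 1} + #{x : K | frobTrace m (x ^ (2 ^ m + 1)) = 1} := by
  have hT : ∀ x : K, x ^ 2 ^ (2 * m) = x := fun x => by
    rw [pow_mul', ← hK, FiniteField.pow_card]
  rw [← two_mul_card_filter_and_add_card_filter_add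
    (fun x => frobTrace_eq_zero_or_eq_one (hT x))
    (fun x => frobTrace_eq_zero_or_eq_one (pow_succ_pow_eq_self hK x))]
  congr 1
  refine (card_equiv (Equiv.addLeft 1) fun x => ?_).symm
  simp only [mem_filter, mem_univ, true_and, Equiv.coe_addLeft, frobTrace_one_add_pow]
  rw [add_assoc, add_comm 1 (m : K), add_right_inj]

end CharTwoFiniteField

theorem card_galoisField_two_mul {m : ℕ} (hm : m ≠ 0) :
    Fintype.card (GaloisField 2 (2 * m)) = (2 ^ m) ^ 2 := by
  rw [Fintype.card_eq_nat_card, GaloisField.card 2 _ (mul_ne_zero two_ne_zero hm), pow_mul']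

theorem Dtwo_eq_filter (m : ℕ) :
    Dtwo m = ({x | frobTrace (2 * m) x = 1 ∧ frobTrace m (x ^ (2 ^ m + 1)) = 1} :
      Finset (GaloisField 2 (2 * m))) := by
  ext x
  have hconj : x * fieldConj m x = x ^ (2 ^ m + 1) := (pow_succ' x _).symm
  simp only [Dtwo, mem_filter, mem_univ, true_and, hconj]
  refine ⟨fun h => ⟨(frobTrace_add_self_pow m x).symm.trans h.2.1, h.2.2⟩,
    fun h => ⟨?_, (frobTrace_add_self_pow m x).trans h.1, h.2⟩⟩
  rintro rfl
  simp [frobTrace] at h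

/-- For `n = 2m`, `q = 2^n` and
`D = {x ∈ F_q^* : Tr^m(x + x̄) = Tr^m(x·x̄) = 1}` one has `|D| = 2^{n−2}`
if `m` is even, and `|D| = 2^{n−2} + 2^{m−1}` if `m` is odd. -/
theorem card_Dtwo (m : ℕ) (hm : 1 ≤ m) :
    (Even m → (Dtwo m).card = 2 ^ (2 * m - 2)) ∧
    (Odd m → (Dtwo m).card = 2 ^ (2 * m - 2) + 2 ^ (m - 1)) := by
  obtain ⟨k, rfl⟩ : ∃ k, m = k + 1 := ⟨m - 1, by omega⟩
  have hK := card_galoisField_two_mul (Nat.add_one_ne_zero k)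
  have hA := card_filter_frobTrace_eq_one_of_card (K := GaloisField 2 (2 * (k + 1)))
    (k := 2 * k + 1) (by rw [hK]; ring)
  rw [show 2 * k + 1 + 1 = 2 * (k + 1) by ring] at hA
  have hB := card_filter_frobTrace_pow_eq_one hK
  have hIE := two_mul_card_filter_frobTrace_add_card hK
  rw [← Dtwo_eq_filter, hA, hB, CharTwo.natCast_eq_ite] at hIE
  have e1 : 2 ^ (2 * k + 1) = 2 * 2 ^ (2 * k) := by ring
  have e2 : 2 ^ k * (2 ^ (k + 1) + 1) = 2 * 2 ^ (2 * k) + 2 ^ k := by ring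
  rw [show 2 * (k + 1) - 2 = 2 * k by omega, Nat.add_sub_cancel]
  refine ⟨fun heven => ?_, fun hodd => ?_⟩
  · rw [if_pos heven, add_zero, hB] at hIE
    omega
  · have hC := card_filter_eq_zero_add_card_filter_eq_one
      (fun x : GaloisField 2 (2 * (k + 1)) =>
        frobTrace_eq_zero_or_eq_one (pow_succ_pow_eq_self hK x))
    rw [if_neg (Nat.not_even_iff_odd.mpr hodd), CharTwo.add_self_eq_zero] at hIE
    rw [hK, hB, show (2 ^ (k + 1)) ^ 2 = 4 * 2 ^ (2 * k) by ring] at hC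
    omega
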